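/- arXiv:2201.04930 — 3 statements merged into one kernel-verified Lean document; each statement's English description precedes it below -/
import Mathlib

section
/- Let G be a finite group, Q a p-subgroup of G, and k a field of characteristic p. The Brauer map br_Q : (kG)^Q → kC_G(Q), sending a fixed element a = Σ_g α_g g to Σ_{g ∈ C_G(Q)} α_g g, is a surjective homomorphism of k-algebras; in particular br_Q(aa') = br_Q(a)br_Q(a') for all a, a' ∈ (kG)^Q. -/
/-!
For `Q`-fixed `a, a'` and `g ∈ C_G(Q)`, the summands `y ↦ a(y) a'(y⁻¹ g)` of `(a a')(g)` are
constant on orbits of `Q` acting on `G` by conjugation. An orbit that is not a single point has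
size a positive power of `p`, so it contributes zero in characteristic `p`, and only the fixed
points `y ∈ C_G(Q)` survive: these give exactly `(br a · br a')(g)`. Linearity and `br 1 = 1` are
immediate; extending `c ∈ k C_G(Q)` by zero gives a `Q`-fixed preimage, since `Q` centralizes
`C_G(Q)` and normalizes it.
-/

open MulAction Subgroup

theorem IsPGroup.sum_eq_zero_of_forall_mem_fixedPoints {p : ℕ} [Fact p.Prime] {k : Type*}
    [Semiring k] [CharP k p] {P X : Type*} [Group P] [MulAction P X] [Fintype X]
    (hP : IsPGroup p P) {f : X → k} (hf : ∀ (c : P) (x : X), f (c • x) = f x)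
    (hf₀ : ∀ x ∈ fixedPoints P X, f x = 0) :
    ∑ x, f x = 0 := by
  classical
  rw [← (selfEquivSigmaOrbits P X).symm.sum_comp, Fintype.sum_sigma]
  refine Finset.sum_eq_zero fun ω _ => ?_
  have hconst : ∀ y : orbit P ω.out, f y = f ω.out := by
    rintro ⟨_, c, rfl⟩
    exact hf c _
  change ∑ y : orbit P ω.out, f y = 0
  rw [Finset.sum_congr rfl fun y _ => hconst y, Finset.sum_const, Finset.card_univ,
    ← Nat.card_eq_fintype_card]
  obtain ⟨_ | n, hn⟩ := hP.card_orbit ω.out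
  · rw [hf₀ _ (mem_fixedPoints_iff_card_orbit_eq_one.2 (by rwa [← Nat.card_eq_fintype_card])),
      smul_zero]
  · rw [hn, nsmul_eq_mul, Nat.cast_pow, CharP.cast_eq_zero, zero_pow n.succ_ne_zero, zero_mul]

section Centralizer

variable {G : Type*} [Group G] {Q : Subgroup G} {q g : G}

theorem conj_eq_self_of_mem_centralizer (hq : q ∈ Q) (hg : g ∈ centralizer (Q : Set G)) :
    q * g * q⁻¹ = g :=
  mul_inv_eq_iff_eq_mul.2 (mem_centralizer_iff.1 hg q hq)

theorem conj_mem_centralizer_iff (hq : q ∈ Q) :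
    q * g * q⁻¹ ∈ centralizer (Q : Set G) ↔ g ∈ centralizer (Q : Set G) := by
  refine ⟨fun h => ?_, fun h => by rwa [conj_eq_self_of_mem_centralizer hq h]⟩
  rwa [← conj_eq_self_of_mem_centralizer (inv_mem hq) h, inv_inv, ← mul_assoc, ← mul_assoc,
    inv_mul_cancel, one_mul, mul_assoc, inv_mul_cancel, mul_one] at h

theorem mem_centralizer_of_mem_fixedPoints
    (hg : g ∈ fixedPoints (Q.comap (ConjAct.ofConjAct : ConjAct G ≃* G).toMonoidHom) G) :
    g ∈ centralizer (Q : Set G) := by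
  refine mem_centralizer_iff.2 fun q hq => mul_inv_eq_iff_eq_mul.1 ?_
  exact hg ⟨ConjAct.toConjAct q, hq⟩

theorem IsPGroup.sum_eq_sum_centralizer {p : ℕ} [Fact p.Prime] {k : Type*} [Semiring k]
    [CharP k p] [Fintype G] [DecidablePred (· ∈ centralizer (Q : Set G))] (hQ : IsPGroup p Q)
    {f : G → k} (hf : ∀ q ∈ Q, ∀ g, f (q * g * q⁻¹) = f g) :
    ∑ g, f g = ∑ g : centralizer (Q : Set G), f g := by
  have hnoncentral : ∑ g, (if g ∉ centralizer (Q : Set G) then f g else 0) = 0 := by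
    have hP := hQ.comap_of_injective (ConjAct.ofConjAct : ConjAct G ≃* G).toMonoidHom
      ConjAct.ofConjAct.injective
    refine hP.sum_eq_zero_of_forall_mem_fixedPoints (fun c g => ?_) fun g hg =>
      if_neg (not_not.2 (mem_centralizer_of_mem_fixedPoints hg))
    have hc : ConjAct.ofConjAct c.1 ∈ Q := c.2
    simp only [Subgroup.smul_def, ConjAct.smul_def, conj_mem_centralizer_iff hc, hf _ hc]
  rw [← Finset.sum_filter_add_sum_filter_not Finset.univ (· ∈ centralizer (Q : Set G)),
    Finset.sum_filter (· ∉ _), hnoncentral, add_zero,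
    Finset.sum_subtype _ Finset.mem_filter_univ]

end Centralizer

namespace MonoidAlgebra

variable {k G : Type*} [Semiring k] [Group G]

theorem coeff_mul_eq_sum [Fintype G] (x y : MonoidAlgebra k G) (g : G) :
    (x * y).coeff g = ∑ h, x.coeff h * y.coeff (h⁻¹ * g) := by
  rw [coeff_mul_apply_left, Finsupp.sum_fintype _ _ (by simp)]

variable {Q : Subgroup G}

theorem coeff_mul_eq_sum_centralizer {p : ℕ} [Fact p.Prime] [CharP k p] [Fintype G]
    [DecidablePred (· ∈ centralizer (Q : Set G))] (hQ : IsPGroup p Q) {a a' : MonoidAlgebra k G}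
    (ha : ∀ q ∈ Q, ∀ g : G, a.coeff (q * g * q⁻¹) = a.coeff g)
    (ha' : ∀ q ∈ Q, ∀ g : G, a'.coeff (q * g * q⁻¹) = a'.coeff g)
    (g : centralizer (Q : Set G)) :
    (a * a').coeff g =
      ∑ h : centralizer (Q : Set G), a.coeff h * a'.coeff ((h⁻¹ * g :) : G) := by
  rw [coeff_mul_eq_sum]
  refine hQ.sum_eq_sum_centralizer fun q hq h => ?_
  have hg : (q * h * q⁻¹)⁻¹ * g = q * (h⁻¹ * g) * q⁻¹ := by
    conv_lhs => rw [← conj_eq_self_of_mem_centralizer hq g.2]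
    group
  rw [ha q hq, hg, ha' q hq]

theorem coeff_mapDomain_centralizer_conj (c : MonoidAlgebra k (centralizer (Q : Set G)))
    {q : G} (hq : q ∈ Q) (g : G) :
    (mapDomain (↑) c).coeff (q * g * q⁻¹) = (mapDomain (↑) c).coeff g := by
  by_cases hg : g ∈ centralizer (Q : Set G)
  · rw [conj_eq_self_of_mem_centralizer hq hg]
  · have hg' := (conj_mem_centralizer_iff hq).not.2 hg
    simp only [coeff_mapDomain]
    rw [Finsupp.mapDomain_of_notMem_range _ _ (by simpa using hg'),
      Finsupp.mapDomain_of_notMem_range _ _ (by simpa using hg)]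

end MonoidAlgebra

/-- Let `G` be a finite group, `Q` a `p`-subgroup of `G`, and `k` a field of
characteristic `p`.  The Brauer map `br_Q : (kG)^Q → k C_G(Q)`, sending a `Q`-conjugation-fixed
element `a = Σ_g α_g g` to `Σ_{g ∈ C_G(Q)} α_g g` (i.e. the map characterised by
`br a g = a g` for `g ∈ C_G(Q)`), is a surjective homomorphism of `k`-algebras; in particular
`br (a * a') = br a * br a'` for all `Q`-fixed `a, a'`. -/
theorem brauer_map_is_surjective_algebra_hom
    (p : ℕ) [Fact p.Prime] (k : Type*) [Field k] [CharP k p]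
    (G : Type*) [Group G] [Fintype G] (Q : Subgroup G) (hQ : IsPGroup p Q)
    (br : MonoidAlgebra k G → MonoidAlgebra k ↥(Subgroup.centralizer (Q : Set G)))
    (hbr : ∀ (a : MonoidAlgebra k G) (g : ↥(Subgroup.centralizer (Q : Set G))),
      (br a).coeff g = a.coeff (g : G)) :
    (∀ a a' : MonoidAlgebra k G,
        (∀ q ∈ Q, ∀ g : G, a.coeff (q * g * q⁻¹) = a.coeff g) →
        (∀ q ∈ Q, ∀ g : G, a'.coeff (q * g * q⁻¹) = a'.coeff g) →
        br (a * a') = br a * br a')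
      ∧ (∀ a a' : MonoidAlgebra k G, br (a + a') = br a + br a')
      ∧ (∀ (r : k) (a : MonoidAlgebra k G), br (r • a) = r • br a)
      ∧ br 1 = 1
      ∧ (∀ c : MonoidAlgebra k ↥(Subgroup.centralizer (Q : Set G)),
          ∃ a : MonoidAlgebra k G,
            (∀ q ∈ Q, ∀ g : G, a.coeff (q * g * q⁻¹) = a.coeff g) ∧ br a = c) := by
  classical
  refine ⟨fun a a' ha ha' => ?_, fun a a' => ?_, fun r a => ?_, ?_, fun c => ?_⟩
  · ext g
    rw [hbr, MonoidAlgebra.coeff_mul_eq_sum_centralizer hQ ha ha', MonoidAlgebra.coeff_mul_eq_sum]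
    simp only [hbr]
  · ext g
    simp [hbr]
  · ext g
    simp [hbr]
  · ext g
    rw [hbr]
    simp [MonoidAlgebra.one_def, MonoidAlgebra.coeff_single, Finsupp.single_apply, eq_comm]
  · refine ⟨MonoidAlgebra.mapDomain (↑) c,
      fun q hq => MonoidAlgebra.coeff_mapDomain_centralizer_conj c hq, ?_⟩
    ext g
    rw [hbr, MonoidAlgebra.coeff_mapDomain]
    exact Finsupp.mapDomain_apply Subtype.val_injective c.coeff g
end

section
/- Let G be a finite group with a normal subgroup N such that G/N is a p-group, and let k be an algebraically closed field of characteristic p. Then for every block (primitive central idempotent) b of kN, there is exactly one block of kG that covers b, i.e. exactly one primitive central idempotent d of kG with db ≠ 0. -/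
/-- A block of a ring: a primitive central idempotent. -/
def IsBlockOf (R : Type*) [Ring R] (b : R) : Prop :=
  b ∈ Set.center R ∧ IsIdempotentElem b ∧ b ≠ 0 ∧
    ∀ e f : R, e ∈ Set.center R → f ∈ Set.center R → IsIdempotentElem e →
      IsIdempotentElem f → e * f = 0 → b = e + f → e = 0 ∨ f = 0

/-!
Every central idempotent `z` of `kG` already lies in `kN`. Write `z = ∑ z_x` with `z_x` the
part of `z` supported on the coset `x ∈ G/N`. If every coset meeting the support of `z` is
central in `G/N`, the parts `z_x` are central in `kG`, so they commute and
`z = z ^ p ^ n = ∑ z_x ^ p ^ n`; as `z_x ^ p ^ n` is supported on the coset `x ^ p ^ n = 1`,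
`z` is supported on `N`. Passing to the quotients of `G/N` by the terms of its upper central
series removes the centrality assumption, since `G/N` is nilpotent.
Hence `z` is a central idempotent of `kN` and acts on the block `b` as `0` or as `1`. So every
block of `kG` covering `b` fixes `b`, the product of two such blocks is nonzero, and they are
equal.
-/

open MonoidAlgebra

namespace IsBlockOf

variable {R : Type*} [Ring R]

theorem mul_eq_zero_or_eq_self {d u : R} (hd : IsBlockOf R d) (hu : u ∈ Set.center R)
    (hu' : IsIdempotentElem u) : d * u = 0 ∨ d * u = d := by
  obtain ⟨hdc, hdi, -, hprim⟩ := hd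
  have hcomm : Commute d u := Semigroup.mem_center_iff.mp hu d
  have hu₁ : 1 - u ∈ Set.center R := (Subring.center R).sub_mem (Subring.center R).one_mem hu
  have horth : d * u * (d * (1 - u)) = 0 :=
    calc d * u * (d * (1 - u)) = d * (d * (u * (1 - u))) := by
          rw [mul_assoc, ← mul_assoc u, ← hcomm.eq, mul_assoc]
      _ = 0 := by rw [mul_sub, mul_one, hu'.eq, sub_self, mul_zero, mul_zero]
  refine (hprim _ _ (Set.mul_mem_center hdc hu) (Set.mul_mem_center hdc hu₁)
    (hdi.mul_of_commute hcomm hu') (hdi.mul_of_commute ((Commute.one_right d).sub_right hcomm)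
      hu'.one_sub) horth (by noncomm_ring)).imp id fun h => ?_
  rwa [mul_sub, mul_one, sub_eq_zero, eq_comm] at h

theorem eq_of_mul_ne_zero {d d' : R} (hd : IsBlockOf R d) (hd' : IsBlockOf R d')
    (h : d * d' ≠ 0) : d = d' := by
  have hcomm : d' * d = d * d' := (Semigroup.mem_center_iff.mp hd'.1 d).symm
  have h₁ := (hd.mul_eq_zero_or_eq_self hd'.1 hd'.2.1).resolve_left h
  have h₂ := (hd'.mul_eq_zero_or_eq_self hd.1 hd.2.1).resolve_left (hcomm ▸ h)
  rw [← h₁, ← hcomm, h₂]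

end IsBlockOf

section Artinian

variable {R : Type*} [Ring R]

theorem span_singleton_lt_span_singleton_of_eq_add {e f g : R} (hg : g ∈ Set.center R)
    (hf' : IsIdempotentElem f) (hg' : IsIdempotentElem g) (hfg : f * g = 0) (hg₀ : g ≠ 0)
    (he : e = f + g) : Submodule.span R {f} < Submodule.span R {e} := by
  have hgf : g * f = 0 := by rw [← Semigroup.mem_center_iff.mp hg f, hfg]
  refine SetLike.lt_iff_le_and_exists.mpr ⟨?_, g, ?_, fun hmem => hg₀ ?_⟩
  · rw [Submodule.span_singleton_le_iff_mem, Submodule.mem_span_singleton]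
    exact ⟨f, by rw [smul_eq_mul, he, mul_add, hf'.eq, hfg, add_zero]⟩
  · exact Submodule.mem_span_singleton.mpr
      ⟨g, by rw [smul_eq_mul, he, mul_add, hgf, hg'.eq, zero_add]⟩
  · obtain ⟨a, ha⟩ := Submodule.mem_span_singleton.mp hmem
    rw [← hg'.eq]
    nth_rw 1 [← ha]
    rw [smul_eq_mul, mul_assoc, hfg, mul_zero]

theorem exists_isBlockOf_mul_ne_zero [IsArtinianRing R] {v : R} (hv : v ≠ 0) :
    ∃ d, IsBlockOf R d ∧ d * v ≠ 0 := by
  obtain ⟨_, ⟨e, ⟨hec, hei, hev⟩, rfl⟩, hmin⟩ := IsArtinian.set_has_minimal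
    ((fun e : R => Submodule.span R {e}) ''
      {e | e ∈ Set.center R ∧ IsIdempotentElem e ∧ e * v ≠ 0})
    ⟨_, 1, ⟨Set.one_mem_center, .one, by rwa [one_mul]⟩, rfl⟩
  refine ⟨e, ⟨hec, hei, fun h => hev (by rw [h, zero_mul]), ?_⟩, hev⟩
  intro f g hfc hgc hfi hgi hfg he
  by_contra! hne
  have hgf : g * f = 0 := by rw [← Semigroup.mem_center_iff.mp hgc f, hfg]
  by_cases hfv : f * v = 0
  · refine hmin _ ⟨g, ⟨hgc, hgi, fun hgv => hev ?_⟩, rfl⟩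
      (span_singleton_lt_span_singleton_of_eq_add hfc hgi hfi hgf hne.1 (he.trans (add_comm f g)))
    rw [he, add_mul, hfv, hgv, add_zero]
  · exact hmin _ ⟨f, ⟨hfc, hfi, hfv⟩, rfl⟩
      (span_singleton_lt_span_singleton_of_eq_add hgc hfi hgi hfg hne.2 he)

end Artinian

namespace MonoidAlgebra

instance charP {k M : Type*} [CommRing k] [Monoid M] (p : ℕ) [CharP k p] : CharP k[M] p :=
  charP_of_injective_ringHom (f := singleOneRingHom) single_right_injective p

theorem mem_center_iff_coeff_conj {k G : Type*} [CommSemiring k] [Group G] {a : k[G]} :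
    a ∈ Set.center k[G] ↔ ∀ g h : G, a.coeff (g * h * g⁻¹) = a.coeff h := by
  rw [Semigroup.mem_center_iff]
  constructor
  · intro ha g h
    simpa using (congrArg (fun x : k[G] => x.coeff (g * h)) (ha (single g 1))).symm
  · intro ha w
    induction w using MonoidAlgebra.induction_linear with
    | zero => rw [zero_mul, mul_zero]
    | add u v hu hv => rw [add_mul, mul_add, hu, hv]
    | single g r =>
      ext h
      rw [coeff_single_mul_apply, coeff_mul_single_apply, mul_comm, ← ha g (g⁻¹ * h)]
      group

variable {k G Q : Type*} [CommRing k] [Group G] [Group Q]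

section Fiber

variable (f : G →* Q)

theorem map_eq_pow_of_mem_support_pow {x : Q} {a : k[G]} (ha : ∀ g ∈ a.coeff.support, f g = x)
    (n : ℕ) : ∀ g ∈ (a ^ n).coeff.support, f g = x ^ n := by
  classical
  induction n with
  | zero =>
    intro g hg
    rw [pow_zero] at hg
    rw [Finset.mem_one.mp (support_coeff_one_subset hg), map_one, pow_zero]
  | succ n ih =>
    intro g hg
    rw [pow_succ] at hg
    obtain ⟨g₁, hg₁, g₂, hg₂, rfl⟩ := Finset.mem_mul.mp (support_coeff_mul_subset _ _ hg)
    rw [map_mul, ih g₁ hg₁, ha g₂ hg₂, pow_succ]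

variable [DecidableEq Q]

def fiberPart (x : Q) (a : k[G]) : k[G] :=
  ofCoeff (a.coeff.filter (f · = x))

theorem coeff_fiberPart (x : Q) (a : k[G]) (g : G) :
    (fiberPart f x a).coeff g = if f g = x then a.coeff g else 0 :=
  Finsupp.filter_apply _ _ _

theorem map_eq_of_mem_support_fiberPart {x : Q} {a : k[G]} {g : G}
    (hg : g ∈ (fiberPart f x a).coeff.support) : f g = x := by
  by_contra h
  exact Finsupp.mem_support_iff.mp hg (by rw [coeff_fiberPart, if_neg h])

theorem sum_fiberPart [Fintype Q] (a : k[G]) : ∑ x, fiberPart f x a = a := by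
  ext g
  simp only [coeff_sum, Finsupp.finsetSum_apply, coeff_fiberPart, Finset.sum_ite_eq,
    Finset.mem_univ, if_true]

theorem fiberPart_mem_center {a : k[G]} (ha : a ∈ Set.center k[G])
    (hsupp : ∀ g ∈ a.coeff.support, f g ∈ Subgroup.center Q) (x : Q) :
    fiberPart f x a ∈ Set.center k[G] := by
  rw [mem_center_iff_coeff_conj] at ha ⊢
  intro g h
  rw [coeff_fiberPart, coeff_fiberPart, ha]
  by_cases h0 : a.coeff h = 0
  · simp only [h0, ite_self]
  have hfh : f (g * h * g⁻¹) = f h := by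
    rw [map_mul, map_mul, map_inv,
      Subgroup.mem_center_iff.mp (hsupp h (Finsupp.mem_support_iff.mpr h0)) (f g),
      mul_inv_cancel_right]
  rw [hfh]

end Fiber

variable {p : ℕ} [Fact p.Prime] [CharP k p]

theorem map_eq_one_of_mem_support_of_map_mem_center [Finite Q] (hQ : IsPGroup p Q) (f : G →* Q)
    {z : k[G]} (hz : z ∈ Set.center k[G]) (hzi : IsIdempotentElem z)
    (hsupp : ∀ g ∈ z.coeff.support, f g ∈ Subgroup.center Q) :
    ∀ g ∈ z.coeff.support, f g = 1 := by
  classical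
  have := Fintype.ofFinite Q
  obtain ⟨n, hn⟩ := IsPGroup.iff_card.mp hQ
  -- The parts of `z` live in the commutative ring `Z(kG)`, where Frobenius is additive.
  let part (x : Q) : Subring.center k[G] := ⟨fiberPart f x z, fiberPart_mem_center f hz hsupp x⟩
  have hfrob : z = ∑ x, fiberPart f x z ^ p ^ n :=
    calc z = (∑ x, fiberPart f x z) ^ p ^ n := by
          rw [sum_fiberPart, hzi.pow_eq (pow_ne_zero n (Fact.out : p.Prime).ne_zero)]
      _ = ∑ x, fiberPart f x z ^ p ^ n := by
          simpa only [map_pow, map_sum, Subring.subtype_apply] using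
            congrArg (Subring.center k[G]).subtype (sum_pow_char_pow p n Finset.univ part)
  intro g hg
  by_contra hne
  refine Finsupp.mem_support_iff.mp hg ?_
  rw [hfrob, coeff_sum, Finsupp.finsetSum_apply]
  refine Finset.sum_eq_zero fun x _ => Finsupp.notMem_support_iff.mp fun hgx => hne ?_
  rw [map_eq_pow_of_mem_support_pow f (fun _ => map_eq_of_mem_support_fiberPart f) _ g hgx, ← hn,
    pow_card_eq_one']

theorem map_eq_one_of_mem_support_of_isPGroup [Finite Q] (hQ : IsPGroup p Q) (f : G →* Q)
    {z : k[G]} (hz : z ∈ Set.center k[G]) (hzi : IsIdempotentElem z) :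
    ∀ g ∈ z.coeff.support, f g = 1 := by
  have descend (n : ℕ) (hn : ∀ g ∈ z.coeff.support, f g ∈ Subgroup.upperCentralSeries Q n) :
      ∀ g ∈ z.coeff.support, f g = 1 := by
    induction n with
    | zero => simpa only [Subgroup.upperCentralSeries_zero, Subgroup.mem_bot] using hn
    | succ n ih =>
      refine ih fun g hg => (QuotientGroup.eq_one_iff _).mp ?_
      refine map_eq_one_of_mem_support_of_map_mem_center (hQ.to_quotient _)
        ((QuotientGroup.mk' _).comp f) hz hzi (fun g hg => ?_) g hg
      have := hn g hg
      rwa [Subgroup.mem_upperCentralSeries_succ_iff, ← Subgroup.mem_upperCentralSeriesStep,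
        Subgroup.upperCentralSeriesStep_eq_comap_center] at this
  obtain ⟨n, hn⟩ := hQ.isNilpotent.nilpotent
  exact descend n fun g _ => hn ▸ Subgroup.mem_top (f g)

theorem exists_mem_center_mapDomainRingHom_eq {H : Subgroup G} {z : k[G]}
    (hz : z ∈ Set.center k[G]) (hsupp : ∀ g ∈ z.coeff.support, g ∈ H) :
    ∃ z' ∈ Set.center k[H], mapDomainRingHom k H.subtype z' = z := by
  have hinj : Function.Injective (mapDomainRingHom k H.subtype) :=
    mapDomain_injective Subtype.val_injective
  have hz' : mapDomainRingHom k H.subtype (comapDomain _ Subtype.val_injective z) = z :=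
    mapDomain_comapDomain (fun g hg => ⟨⟨g, hsupp g hg⟩, rfl⟩) _
  refine ⟨_, Semigroup.mem_center_iff.mpr fun w => hinj ?_, hz'⟩
  rw [map_mul, map_mul, hz', Semigroup.mem_center_iff.mp hz]

theorem mul_mapDomainRingHom_block_eq_zero_or_eq (N : Subgroup G) [N.Normal] [Finite (G ⧸ N)]
    (hquot : IsPGroup p (G ⧸ N)) {b : k[N]} (hb : IsBlockOf k[N] b) {z : k[G]}
    (hz : z ∈ Set.center k[G]) (hzi : IsIdempotentElem z) :
    z * mapDomainRingHom k N.subtype b = 0 ∨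
      z * mapDomainRingHom k N.subtype b = mapDomainRingHom k N.subtype b := by
  obtain ⟨z', hz'c, rfl⟩ := exists_mem_center_mapDomainRingHom_eq hz fun g hg =>
    (QuotientGroup.eq_one_iff g).mp
      (map_eq_one_of_mem_support_of_isPGroup hquot (QuotientGroup.mk' N) hz hzi g hg)
  have hz'i : IsIdempotentElem z' := mapDomain_injective Subtype.val_injective
    ((map_mul (mapDomainRingHom k N.subtype) z' z').trans hzi.eq)
  rw [← map_mul, ← Semigroup.mem_center_iff.mp hz'c b]
  rcases hb.mul_eq_zero_or_eq_self hz'c hz'i with h | h <;>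
    simp only [h, map_zero, true_or, or_true]

end MonoidAlgebra

theorem unique_covering_block_of_pGroup_quotient_general
    (p : ℕ) [Fact p.Prime] (k : Type*) [Field k] [CharP k p]
    (G : Type*) [Group G] [Fintype G] (N : Subgroup G) [N.Normal]
    (hquot : IsPGroup p (G ⧸ N))
    (b : MonoidAlgebra k ↥N) (hb : IsBlockOf _ b) :
    ∃! d : MonoidAlgebra k G,
      IsBlockOf _ d ∧ d * MonoidAlgebra.mapDomainRingHom k N.subtype b ≠ 0 := by
  set B := mapDomainRingHom k N.subtype b
  have hB : B ≠ 0 := (map_ne_zero_iff _ (mapDomain_injective Subtype.val_injective)).mpr hb.2.2.1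
  have hcover (d : k[G]) (hd : IsBlockOf _ d) (hdB : d * B ≠ 0) : d * B = B :=
    (mul_mapDomainRingHom_block_eq_zero_or_eq N hquot hb hd.1 hd.2.1).resolve_left hdB
  have := IsArtinianRing.of_finite k k[G]
  obtain ⟨d, hd, hdB⟩ := exists_isBlockOf_mul_ne_zero hB
  refine ⟨d, ⟨hd, hdB⟩, fun d' ⟨hd', hd'B⟩ => hd'.eq_of_mul_ne_zero hd fun h => hB ?_⟩
  calc B = d' * (d * B) := by rw [hcover d hd hdB, hcover d' hd' hd'B]
    _ = 0 := by rw [← mul_assoc, h, zero_mul]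

/-- Let `G` be a finite group with a normal subgroup `N` such that `G/N` is a
`p`-group, and let `k` be an algebraically closed field of characteristic `p`.  Then for every
block `b` of `kN`, there is exactly one block `d` of `kG` that covers `b`, i.e. exactly one
primitive central idempotent `d` of `kG` with `d * b ≠ 0` (where `b` is viewed inside `kG`). -/
theorem unique_covering_block_of_pGroup_quotient
    (p : ℕ) [Fact p.Prime] (k : Type*) [Field k] [CharP k p] [IsAlgClosed k]
    (G : Type*) [Group G] [Fintype G] (N : Subgroup G) [N.Normal]
    (hquot : IsPGroup p (G ⧸ N))
    (b : MonoidAlgebra k ↥N) (hb : IsBlockOf _ b) :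
    ∃! d : MonoidAlgebra k G,
      IsBlockOf _ d ∧ d * MonoidAlgebra.mapDomainRingHom k N.subtype b ≠ 0 :=
  unique_covering_block_of_pGroup_quotient_general p k G N hquot b hb
end

section
/- Let p = 3, S = C₃ × C₃, H = S ⋊ D₈ where the dihedral group D₈ of order 8 acts faithfully on S, and G = S ⋊ (C₂ × C₂) the subgroup corresponding to a Klein four subgroup V of D₈ containing a reflection r such that N = S ⋊ ⟨r⟩ (with r acting as a reflection on S) satisfies N ⊴ G. Then N_H(N) = G, and the fusion system F_S(G) is a proper subsystem of F_S(H); in particular F_S(H) ≠ F_S(N_H(N)). -/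
/-- The elementary abelian group of order 9, written multiplicatively. -/
abbrev V9 : Type := Multiplicative (ZMod 3 × ZMod 3)

/-- Rotation by 90 degrees: `(a, b) ↦ (-b, a)`, an automorphism of order 4 of `C₃ × C₃`. -/
def rotAut : MulAut V9 where
  toFun v := Multiplicative.ofAdd (-(Multiplicative.toAdd v).2, (Multiplicative.toAdd v).1)
  invFun v := Multiplicative.ofAdd ((Multiplicative.toAdd v).2, -(Multiplicative.toAdd v).1)
  left_inv v := by
    simp [Prod.ext_iff]
  right_inv v := by
    simp [Prod.ext_iff]
  map_mul' v w := by
    simp [← ofAdd_add, Prod.ext_iff, neg_add, add_comm]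

/-- A reflection: `(a, b) ↦ (a, -b)`, an automorphism of order 2 of `C₃ × C₃`. -/
def refAut : MulAut V9 where
  toFun v := Multiplicative.ofAdd ((Multiplicative.toAdd v).1, -(Multiplicative.toAdd v).2)
  invFun v := Multiplicative.ofAdd ((Multiplicative.toAdd v).1, -(Multiplicative.toAdd v).2)
  left_inv v := by
    simp [Prod.ext_iff]
  right_inv v := by
    simp [Prod.ext_iff]
  map_mul' v w := by
    simp [← ofAdd_add, Prod.ext_iff, neg_add, add_comm]

/-- The dihedral group of order 8, acting faithfully on `C₃ × C₃`. -/
def D8 : Subgroup (MulAut V9) := Subgroup.closure {rotAut, refAut}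

/-- The Klein four subgroup `⟨rot², ref⟩` of `D8`. -/
def VKlein : Subgroup ↥D8 :=
  Subgroup.closure
    {⟨rotAut ^ 2, pow_mem (Subgroup.subset_closure (by simp)) 2⟩,
     ⟨refAut, Subgroup.subset_closure (by simp)⟩}

/-- The subgroup `⟨ref⟩` of order 2 of `D8`, generated by a reflection. -/
def RRef : Subgroup ↥D8 :=
  Subgroup.closure {⟨refAut, Subgroup.subset_closure (by simp)⟩}

/-- The group `H = (C₃ × C₃) ⋊ D₈`. -/
abbrev Hgrp : Type := V9 ⋊[D8.subtype] ↥D8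

/-- `S = C₃ × C₃`, a Sylow 3-subgroup of `H`. -/
def Sgrp : Subgroup Hgrp := Subgroup.comap SemidirectProduct.rightHom (⊥ : Subgroup ↥D8)

/-- `G = (C₃ × C₃) ⋊ (C₂ × C₂)`. -/
def Ggrp : Subgroup Hgrp := Subgroup.comap SemidirectProduct.rightHom VKlein

/-- `N = (C₃ × C₃) ⋊ ⟨r⟩`, with `r` acting as a reflection. -/
def Ngrp : Subgroup Hgrp := Subgroup.comap SemidirectProduct.rightHom RRef

/-- `F_S(A) ⊇ F_S(B)` for subgroups `S, A, B` of a group `H`: every morphism of the fusion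
system of `B` on `S` (a conjugation map `Q → S` by an element of `B`) is realised by
conjugation by an element of `A`. -/
def fusionLE {H : Type*} [Group H] (S A B : Subgroup H) : Prop :=
  ∀ Q : Subgroup H, Q ≤ S → ∀ b ∈ B, (∀ q ∈ Q, b * q * b⁻¹ ∈ S) →
    ∃ a ∈ A, ∀ q ∈ Q, a * q * a⁻¹ = b * q * b⁻¹

/-! The normalizer of `N = S ⋊ ⟨r⟩` is the preimage of the normalizer of `⟨r⟩` in `D₈`, which is
the centralizer `⟨-1, r⟩ = V` of the reflection; so `N_H(N) = G`. Since `S` is abelian, an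
element of `H` acts on `S` by conjugation exactly as its image in `D₈` does, and `D₈` acts
faithfully. Hence conjugation by the rotation, a morphism of `F_S(H)`, is induced by no element of
`G`, whose image lies in `V`. -/

open SemidirectProduct Subgroup

namespace V9

def e₁ : V9 := Multiplicative.ofAdd (1, 0)

def e₂ : V9 := Multiplicative.ofAdd (0, 1)

theorem eq_e₁_pow_mul_e₂_pow : ∀ v : V9,
    v = e₁ ^ (Multiplicative.toAdd v).1.val * e₂ ^ (Multiplicative.toAdd v).2.val := by
  decide

theorem mulAut_ext {a b : MulAut V9} (h₁ : a e₁ = b e₁) (h₂ : a e₂ = b e₂) : a = b := by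
  ext v : 1
  rw [eq_e₁_pow_mul_e₂_pow v, map_mul, map_mul, map_pow, map_pow, map_pow, map_pow, h₁, h₂]

-- Comparing on two generators keeps `decide` cheap; enumerating equivalences of `V9` would not.
instance : DecidableEq (MulAut V9) := fun a b =>
  decidable_of_iff (a e₁ = b e₁ ∧ a e₂ = b e₂)
    ⟨fun h => mulAut_ext h.1 h.2, fun h => h ▸ ⟨rfl, rfl⟩⟩

end V9

theorem Subgroup.coe_closure_eq_of_list {G : Type*} [Group G] {s : Set G} {l : List G}
    (hsl : ∀ a ∈ s, a ∈ l) (hls : ∀ a ∈ l, a ∈ closure s) (one_mem : 1 ∈ l)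
    (mul_mem : ∀ a ∈ l, ∀ b ∈ l, a * b ∈ l) (inv_mem : ∀ a ∈ l, a⁻¹ ∈ l) :
    (closure s : Set G) = {x | x ∈ l} :=
  congrArg SetLike.coe <| closure_eq_of_le
    (K := ⟨⟨⟨{x | x ∈ l}, fun ha hb => mul_mem _ ha _ hb⟩, one_mem⟩, fun ha => inv_mem _ ha⟩)
    hsl hls

theorem Subgroup.card_eq_length_of_coe_eq {G : Type*} [Group G] {K : Subgroup G} {l : List G}
    (hK : (K : Set G) = {x | x ∈ l}) (hl : l.Nodup) : Nat.card K = l.length := by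
  classical
  have hK' : (K : Set G) = l.toFinset := by simp [hK]
  rw [← SetLike.coe_sort_coe, Nat.card_coe_set_eq, hK', Set.ncard_coe_finset,
    List.toFinset_card_of_nodup hl]

def d8List : List (MulAut V9) :=
  [1, rotAut, rotAut ^ 2, rotAut ^ 3, refAut, rotAut * refAut, rotAut ^ 2 * refAut,
    rotAut ^ 3 * refAut]

def kleinList : List (MulAut V9) := [1, rotAut ^ 2, refAut, rotAut ^ 2 * refAut]

def refList : List (MulAut V9) := [1, refAut]

theorem rotAut_mem_D8 : rotAut ∈ D8 := subset_closure (Set.mem_insert _ _)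

theorem refAut_mem_D8 : refAut ∈ D8 := subset_closure (Set.mem_insert_of_mem _ rfl)

theorem coe_D8 : (D8 : Set (MulAut V9)) = {x | x ∈ d8List} := by
  refine coe_closure_eq_of_list ?_ ?_ (by decide) ?_ ?_
  · rintro x (rfl | rfl) <;> decide
  · intro x hx
    fin_cases hx
    exacts [one_mem _, rotAut_mem_D8, pow_mem rotAut_mem_D8 2, pow_mem rotAut_mem_D8 3,
      refAut_mem_D8, mul_mem rotAut_mem_D8 refAut_mem_D8,
      mul_mem (pow_mem rotAut_mem_D8 2) refAut_mem_D8,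
      mul_mem (pow_mem rotAut_mem_D8 3) refAut_mem_D8]
  · intro a ha b hb
    fin_cases ha <;> fin_cases hb <;> decide
  · intro a ha
    fin_cases ha <;> decide

theorem coe_map_VKlein :
    (VKlein.map D8.subtype : Set (MulAut V9)) = {x | x ∈ kleinList} := by
  have hgens : D8.subtype '' {⟨rotAut ^ 2, pow_mem rotAut_mem_D8 2⟩, ⟨refAut, refAut_mem_D8⟩} =
      {rotAut ^ 2, refAut} := by
    rw [Set.image_insert_eq, Set.image_singleton]
    rfl
  rw [VKlein, MonoidHom.map_closure, hgens]
  have hsq : rotAut ^ 2 ∈ closure {rotAut ^ 2, refAut} := subset_closure (Set.mem_insert _ _)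
  have href : refAut ∈ closure {rotAut ^ 2, refAut} :=
    subset_closure (Set.mem_insert_of_mem _ rfl)
  refine coe_closure_eq_of_list ?_ ?_ (by decide) ?_ ?_
  · rintro x (rfl | rfl) <;> decide
  · intro x hx
    fin_cases hx
    exacts [one_mem _, hsq, href, mul_mem hsq href]
  · intro a ha b hb
    fin_cases ha <;> fin_cases hb <;> decide
  · intro a ha
    fin_cases ha <;> decide

theorem coe_map_RRef : (RRef.map D8.subtype : Set (MulAut V9)) = {x | x ∈ refList} := by
  rw [RRef, MonoidHom.map_closure, Set.image_singleton]
  change (closure {refAut} : Set (MulAut V9)) = _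
  refine coe_closure_eq_of_list ?_ ?_ (by decide) ?_ ?_
  · rintro x rfl
    decide
  · intro x hx
    fin_cases hx
    exacts [one_mem _, subset_closure rfl]
  · intro a ha b hb
    fin_cases ha <;> fin_cases hb <;> decide
  · intro a ha
    fin_cases ha <;> decide

theorem card_D8 : Nat.card D8 = 8 :=
  card_eq_length_of_coe_eq coe_D8 (by decide)

theorem card_VKlein : Nat.card VKlein = 4 := by
  rw [← card_map_of_injective D8.subtype_injective]
  exact card_eq_length_of_coe_eq coe_map_VKlein (by decide)

theorem card_RRef : Nat.card RRef = 2 := by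
  rw [← card_map_of_injective D8.subtype_injective]
  exact card_eq_length_of_coe_eq coe_map_RRef (by decide)

theorem mem_VKlein_iff {x : D8} : x ∈ VKlein ↔ (x : MulAut V9) ∈ kleinList := by
  rw [← mem_map_iff_mem D8.subtype_injective, ← SetLike.mem_coe, coe_map_VKlein]
  rfl

theorem mem_RRef_iff {x : D8} : x ∈ RRef ↔ (x : MulAut V9) ∈ refList := by
  rw [← mem_map_iff_mem D8.subtype_injective, ← SetLike.mem_coe, coe_map_RRef]
  rfl

theorem RRef_le_VKlein : RRef ≤ VKlein :=
  closure_le _ |>.2 <| Set.singleton_subset_iff.2 <| subset_closure (Set.mem_insert_of_mem _ rfl)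

theorem rotAut_sq : rotAut ^ 2 = MulEquiv.inv V9 := by
  decide

theorem rotAut_sq_mem_center : (⟨rotAut ^ 2, pow_mem rotAut_mem_D8 2⟩ : D8) ∈ center D8 := by
  refine mem_center_iff.2 fun g => Subtype.ext <| MulEquiv.ext fun v => ?_
  simp [rotAut_sq]

theorem mem_kleinList_of_conj_refAut_mem :
    ∀ y ∈ d8List, y * refAut * y⁻¹ ∈ refList → y ∈ kleinList := by
  intro y hy
  fin_cases hy <;> decide

theorem normalizer_RRef : normalizer (RRef : Set D8) = VKlein := by
  refine le_antisymm (fun x hx => ?_) ?_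
  · have hconj : (x : MulAut V9) * refAut * (x : MulAut V9)⁻¹ ∈ refList :=
      mem_RRef_iff.1 <| (mem_normalizer_iff.1 hx _).1 (subset_closure rfl)
    have hx8 : (x : MulAut V9) ∈ d8List := (Set.ext_iff.1 coe_D8 x).1 x.2
    exact mem_VKlein_iff.2 <| mem_kleinList_of_conj_refAut_mem _ hx8 hconj
  · refine closure_le _ |>.2 <| Set.insert_subset_iff.2 ⟨?_, ?_⟩
    · exact center_le_normalizer _ rotAut_sq_mem_center
    · exact Set.singleton_subset_iff.2 <| le_normalizer (subset_closure rfl : _ ∈ RRef)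

theorem index_Sgrp : Sgrp.index = 8 := by
  rw [Sgrp, index_comap_of_surjective _ rightHom_surjective, index_bot, card_D8]

theorem card_Sgrp : Nat.card Sgrp = 9 := by
  have hV9 : Nat.card V9 = 9 := by
    rw [Nat.card_eq_fintype_card]
    rfl
  have hcard := Sgrp.card_mul_index
  rw [index_Sgrp, SemidirectProduct.card, card_D8, hV9] at hcard
  omega

theorem exists_sylow_eq_Sgrp : ∃ P : Sylow 3 Hgrp, (P : Subgroup Hgrp) = Sgrp := by
  have : Fact (Nat.Prime 3) := ⟨Nat.prime_three⟩
  exact ⟨IsPGroup.toSylow (P := Sgrp) (.of_card (n := 2) card_Sgrp) (by rw [index_Sgrp]; norm_num),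
    rfl⟩

theorem Ngrp_le_Ggrp : Ngrp ≤ Ggrp :=
  comap_mono RRef_le_VKlein

theorem normalizer_Ngrp : normalizer (Ngrp : Set Hgrp) = Ggrp := by
  rw [Ngrp, ← comap_normalizer_eq_of_surjective _ rightHom_surjective, normalizer_RRef, Ggrp]

theorem fusionLE_of_le {H : Type*} [Group H] {S A B : Subgroup H} (hBA : B ≤ A) :
    fusionLE S A B :=
  fun _ _ b hb _ => ⟨b, hBA hb, fun _ _ => rfl⟩

theorem SemidirectProduct.mul_inl_mul_inv {N G : Type*} [CommGroup N] [Group G]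
    {φ : G →* MulAut N} (x : N ⋊[φ] G) (n : N) : x * inl n * x⁻¹ = inl (φ x.right n) := by
  ext <;> simp [mul_comm]

theorem not_fusionLE_Ggrp_top : ¬ fusionLE Sgrp Ggrp ⊤ := by
  intro h
  have hS : Sgrp.Normal := by rw [Sgrp]; infer_instance
  obtain ⟨a, haG, ha⟩ := h Sgrp le_rfl (inr ⟨rotAut, rotAut_mem_D8⟩) trivial
    fun q hq => hS.conj_mem q hq _
  have hrot : (a.right : MulAut V9) = rotAut := MulEquiv.ext fun v => by
    have hv := ha (inl v) (by simp [Sgrp])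
    rwa [mul_inl_mul_inv, mul_inl_mul_inv, inl_inj] at hv
  have hmem : (a.right : MulAut V9) ∈ kleinList := mem_VKlein_iff.1 haG
  rw [hrot] at hmem
  exact absurd hmem (by decide)

/-- Let `p = 3`, `S = C₃ × C₃`, `H = S ⋊ D₈` with `D₈` of order 8 acting
faithfully, `G = S ⋊ V` for a Klein four subgroup `V ≤ D₈` containing a reflection `r`, and
`N = S ⋊ ⟨r⟩`, so that `N ⊴ G`.  Then `S` is a Sylow 3-subgroup of `H`, `N_H(N) = G`, and the
fusion system `F_S(G)` is a proper subsystem of `F_S(H)`; in particular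
`F_S(H) ≠ F_S(N_H(N))`. -/
theorem fusion_of_normalizer_differs :
    Nat.card ↥D8 = 8 ∧ Nat.card ↥VKlein = 4 ∧ Nat.card ↥RRef = 2 ∧
    Nat.card ↥Sgrp = 9 ∧
    (∃ Syl : Sylow 3 Hgrp, (Syl : Subgroup Hgrp) = Sgrp) ∧
    Ngrp ≤ Ggrp ∧ Subgroup.normalizer (Ngrp : Set Hgrp) = Ggrp ∧
    fusionLE Sgrp ⊤ Ggrp ∧ ¬ fusionLE Sgrp Ggrp ⊤ :=
  ⟨card_D8, card_VKlein, card_RRef, card_Sgrp, exists_sylow_eq_Sgrp, Ngrp_le_Ggrp,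
    normalizer_Ngrp, fusionLE_of_le le_top, not_fusionLE_Ggrp_top⟩
end
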